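/- The difference in posterior means satisfies Ψ(λ) = E_p(μ|x,λ) − E_p⁰(μ|x) = φ(λ)/ξ(λ), where φ(λ) = Σⱼ λⱼ Cov_p⁰(μ, qⱼ(μ)) is the sensitivity direction function. -/
import Mathlib


open MeasureTheory

/-- The difference in posterior means: Ψ(λ) = E_p(μ|x,λ) − E_p⁰(μ|x) = φ(λ)/ξ(λ), where
φ(λ) = Σⱼ λⱼ Cov_p⁰(μ, qⱼ(μ)). -/
theorem posterior_mean_difference (k : ℕ) (p : ℝ → ℝ) (q : Fin k → ℝ → ℝ)
    (lam : Fin k → ℝ)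
    (hp_one : ∫ μ, p μ = 1)
    (hmean_int : Integrable (fun μ => μ * p μ))
    (hq_int : ∀ j, Integrable (fun μ => q j μ * p μ))
    (hμq_int : ∀ j, Integrable (fun μ => μ * q j μ * p μ))
    (hξ_pos : 0 < 1 + ∑ j, lam j * ∫ μ, q j μ * p μ) :
    (∫ μ, μ * (p μ * (1 + ∑ j, lam j * q j μ) /
        (1 + ∑ j, lam j * ∫ ν, q j ν * p ν))) - ∫ μ, μ * p μ =
      (∑ j, lam j * ((∫ μ, μ * q j μ * p μ) - (∫ μ, μ * p μ) * ∫ μ, q j μ * p μ)) /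
        (1 + ∑ j, lam j * ∫ μ, q j μ * p μ) := by
  set ξ : ℝ := 1 + ∑ j, lam j * ∫ μ, q j μ * p μ with hξ
  have hξ0 : ξ ≠ 0 := ne_of_gt hξ_pos
  have h1 : (∫ μ, μ * (p μ * (1 + ∑ j, lam j * q j μ) / ξ)) =
      ((∫ μ, μ * p μ) + ∑ j, lam j * ∫ μ, μ * q j μ * p μ) / ξ := by
    have key : ∀ μ : ℝ, μ * (p μ * (1 + ∑ j, lam j * q j μ)) =
        μ * p μ + ∑ j, lam j * (μ * q j μ * p μ) := by
      intro μ
      rw [mul_add, mul_one, mul_add, Finset.mul_sum, Finset.mul_sum]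
      congr 1
      exact Finset.sum_congr rfl fun j _ => by ring
    have heq : (fun μ => μ * (p μ * (1 + ∑ j, lam j * q j μ) / ξ)) =
        (fun μ => (μ * p μ + ∑ j, lam j * (μ * q j μ * p μ)) / ξ) := by
      funext μ
      rw [← mul_div_assoc, key μ]
    rw [heq, integral_div, integral_add hmean_int]
    · congr 1
      rw [integral_finset_sum]
      · simp only [integral_const_mul]
      · intro j _; exact (hμq_int j).const_mul _
    · exact integrable_finset_sum _ fun j _ => (hμq_int j).const_mul _
  rw [h1]
  rw [eq_div_iff hξ0, sub_mul, div_mul_cancel₀ _ hξ0, hξ]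
  have hs : ∑ j, lam j * ((∫ μ, μ * q j μ * p μ) - (∫ μ, μ * p μ) * ∫ μ, q j μ * p μ)
      = (∑ j, lam j * ∫ μ, μ * q j μ * p μ)
        - ∑ j, (∫ μ, μ * p μ) * (lam j * ∫ μ, q j μ * p μ) := by
    rw [← Finset.sum_sub_distrib]
    exact Finset.sum_congr rfl fun j _ => by ring
  rw [hs, mul_add, mul_one, Finset.mul_sum]
  ring
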